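/- Fix $k \ge 1$. With $v_\infty = \sum_{n\ge 1} f_n v_n$ where $v_n = [1, q^n z_2, z_2]$ and $f_n = \frac{(-1)^{n-1} q^{n(n-1)/2}(1-q^{2n}z_1z_2^2)}{(q)_\infty (q^{n+1}z_1z_2^2)_\infty (q)_{n-1}(1 - q^n z_2)}$, one has the fixed-point equation $(A+B)v_\infty = v_\infty$, where $A$ and $B$ are the extremal operators defined below. -/

import Mathlib

namespace Boson

/-- Formal power series in `q = X 0`, `z₁ = X 1`, `z₂ = X 2` over `ℚ`. -/
abbrev R := MvPowerSeries (Fin 3) ℚ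

noncomputable def qv : R := MvPowerSeries.X 0
noncomputable def z1v : R := MvPowerSeries.X 1
noncomputable def z2v : R := MvPowerSeries.X 2

/-- The infinite Pochhammer symbol `(a;q)_∞ = ∏_{j≥0}(1 - a qʲ)`, defined
coefficientwise: when `a` has vanishing constant term the coefficient of any
monomial `d` in the partial products stabilizes as soon as the number of factors
exceeds the total degree of `d`. -/
noncomputable def pochInf (a : R) : R := fun d =>
  MvPowerSeries.coeff (R := ℚ) d
    (∏ j ∈ Finset.range (d 0 + d 1 + d 2 + 1), (1 - a * qv ^ j))

/-- The finite Pochhammer symbol `(q;q)_n = ∏_{j=0}^{n-1}(1 - q^{j+1})`. -/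
noncomputable def pochFin (n : ℕ) : R := ∏ j ∈ Finset.range n, (1 - qv ^ (j + 1))

/-- The formal sum `∑_{n≥1} t n`, defined coefficientwise: applicable when the
`n`-th term is divisible by `q^{n(n-1)/2}`, so that the coefficient of any
monomial `d` in the partial sums stabilizes. -/
noncomputable def sumInf (t : ℕ → R) : R := fun d =>
  MvPowerSeries.coeff (R := ℚ) d (∑ n ∈ Finset.range (d 0 + d 1 + d 2 + 2), t (n + 1))

/-- The scalar part
`f_n = (-1)^{n-1} q^{n(n-1)/2} (1-q^{2n}z₁z₂²) / ((q)_∞ (q^{n+1}z₁z₂²)_∞ (q)_{n-1} (1-qⁿz₂))`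
(inverses are taken in `ℚ[[q,z₁,z₂]]`; every inverted factor has constant term `1`). -/
noncomputable def fn (n : ℕ) : R :=
  (-1 : R) ^ (n - 1) * qv ^ (n * (n - 1) / 2) * (1 - qv ^ (2 * n) * z1v * z2v ^ 2) *
    (pochInf qv * pochInf (qv ^ (n + 1) * z1v * z2v ^ 2) * pochFin (n - 1) *
      (1 - qv ^ n * z2v))⁻¹

/-- The shift `S f_n` of the scalar part `f_n` under `z₂ ↦ q z₂`, written out
explicitly (each occurrence of `z₂` in `f_n` is replaced by `q z₂`). -/
noncomputable def fnS (n : ℕ) : R :=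
  (-1 : R) ^ (n - 1) * qv ^ (n * (n - 1) / 2) * (1 - qv ^ (2 * n + 2) * z1v * z2v ^ 2) *
    (pochInf qv * pochInf (qv ^ (n + 3) * z1v * z2v ^ 2) * pochFin (n - 1) *
      (1 - qv ^ (n + 1) * z2v))⁻¹

/-- The `(i,l)`-component of `A(fₙ vₙ)` (for `vₙ = [1, qⁿz₂, z₂]`), written after
the shift `S : z₂ ↦ qz₂`:
`S( fₙ [1, qⁿz₂, q⁻¹z₂] / ((1-qⁿz₁z₂²)(1-q⁻ⁿ)) )`,
with `1/(1-q⁻ⁿ)` expanded, per the paper's convention, in non-negative powers of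
`qⁿ`, i.e. as `-qⁿ (1-qⁿ)⁻¹`. -/
noncomputable def Aterm (n i l : ℕ) : R :=
  fnS n * (qv ^ (n + 1) * z2v) ^ (l - i) * z2v ^ i *
    (1 - qv ^ (n + 2) * z1v * z2v ^ 2)⁻¹ * (-(qv ^ n)) * (1 - qv ^ n)⁻¹

/-- The `(i,l)`-component of `B(fₙ vₙ)`, written after the shift `S : z₂ ↦ qz₂`:
`S( fₙ (1-qⁿz₂) [1, z₂, q⁻¹z₂] / ((1-qⁿz₁z₂²)(1-qⁿ)(1-z₂)) )`. -/
noncomputable def Bterm (n i l : ℕ) : R :=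
  fnS n * (1 - qv ^ (n + 1) * z2v) *
    ((1 - qv ^ (n + 2) * z1v * z2v ^ 2) * (1 - qv ^ n) * (1 - qv * z2v))⁻¹ *
    (qv * z2v) ^ (l - i) * z2v ^ i

end Boson

/-!
The two series are compared through their partial sums, `q`-adically.
`A` maps `fₙvₙ` to `fₙ₊₁vₙ₊₁`, so the `A`-part reproduces every term of `v_∞` except `f₁v₁`.
All terms of the `B`-part are multiples of `v₁`, and their scalars telescope:
`B(fₙ₊₁vₙ₊₁) = (τₙ - τₙ₊₁) v₁` with `τ₀ = f₁`; this is a telescoping proof of the special case of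
Jackson's `₆Φ₅` summation behind `B v_∞ = f₁v₁`. Hence the `N`-th partial sums of the two sides
differ by `f_{N+1} v_{N+1} - τ_N v₁`, which is divisible by `q^{N(N+1)/2}`.
-/

theorem Nat.triangle_add_two (n : ℕ) : (n + 2) * (n + 1) / 2 = (n + 1) * n / 2 + (n + 1) := by
  simpa using Nat.triangle_succ (n + 1)

namespace MvPowerSeries

variable {σ A : Type*} [Ring A] {s : σ} {φ ψ : MvPowerSeries σ A}

theorem coeff_eq_of_X_pow_dvd_sub {n : ℕ} (h : X s ^ n ∣ φ - ψ) {m : σ →₀ ℕ} (hm : m s < n) :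
    coeff m φ = coeff m ψ :=
  sub_eq_zero.1 (by rw [← map_sub]; exact X_pow_dvd_iff.1 h m hm)

theorem eq_of_forall_X_pow_dvd_sub (h : ∀ n, X s ^ n ∣ φ - ψ) : φ = ψ :=
  ext fun m => coeff_eq_of_X_pow_dvd_sub (h (m s + 1)) (Nat.lt_succ_self _)

end MvPowerSeries

namespace Boson

open MvPowerSeries Finset

noncomputable def qPoch (b : R) (n : ℕ) : R := ∏ j ∈ range n, (1 - b * qv ^ j)

theorem qPoch_succ' (b : R) (n : ℕ) : qPoch b (n + 1) = (1 - b) * qPoch (b * qv) n := by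
  simp only [qPoch, prod_range_succ', pow_zero, mul_one, pow_succ', mul_assoc]
  exact mul_comm _ _

theorem qv_pow_dvd_qPoch_sub (b : R) {M N : ℕ} (h : M ≤ N) : qv ^ M ∣ qPoch b N - qPoch b M := by
  induction N, h using Nat.le_induction with
  | base => simp
  | succ N hMN ih =>
    have hstep : qPoch b (N + 1) - qPoch b M =
        (qPoch b N - qPoch b M) - qv ^ N * (b * qPoch b N) := by
      rw [qPoch, prod_range_succ, ← qPoch]; ring
    rw [hstep]
    exact dvd_sub ih (dvd_mul_of_dvd_left (pow_dvd_pow qv hMN) _)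

theorem qv_pow_dvd_pochInf_sub (b : R) (M : ℕ) : qv ^ M ∣ pochInf b - qPoch b M := by
  refine X_pow_dvd_iff.2 fun d hd => ?_
  rw [map_sub, sub_eq_zero]
  change coeff d (qPoch b (d 0 + d 1 + d 2 + 1)) = _
  rcases le_total M (d 0 + d 1 + d 2 + 1) with h | h
  · exact coeff_eq_of_X_pow_dvd_sub (qv_pow_dvd_qPoch_sub b h) hd
  · exact (coeff_eq_of_X_pow_dvd_sub (qv_pow_dvd_qPoch_sub b h) (by omega)).symm

theorem pochInf_eq_one_sub_mul (b : R) : pochInf b = (1 - b) * pochInf (b * qv) := by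
  refine eq_of_forall_X_pow_dvd_sub (s := 0) fun M => ?_
  have hsplit : pochInf b - (1 - b) * pochInf (b * qv) =
      (pochInf b - qPoch b (M + 1)) - (1 - b) * (pochInf (b * qv) - qPoch (b * qv) M) := by
    rw [qPoch_succ']; ring
  rw [hsplit]
  exact dvd_sub ((pow_dvd_pow qv M.le_succ).trans (qv_pow_dvd_pochInf_sub b _))
    (dvd_mul_of_dvd_right (qv_pow_dvd_pochInf_sub _ M) _)

theorem pochFin_succ (n : ℕ) : pochFin (n + 1) = pochFin n * (1 - qv ^ (n + 1)) :=
  prod_range_succ _ n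

/-- The `(i,l)`-component of `vₙ = [1, qⁿz₂, z₂]`. -/
noncomputable def vComp (n i l : ℕ) : R := (qv ^ n * z2v) ^ (l - i) * z2v ^ i

/-- The scalar `τₙ` with `τₙ v₁ = ∑_{m > n} B(f_m v_m)`. -/
noncomputable def bTail (n : ℕ) : R :=
  (-1 : R) ^ n * qv ^ ((n + 1) * n / 2) *
    (pochInf qv * pochInf (qv ^ (n + 3) * z1v * z2v ^ 2) * pochFin n * (1 - qv * z2v))⁻¹

theorem Aterm_succ (n i l : ℕ) : Aterm (n + 1) i l = fn (n + 2) * vComp (n + 2) i l := by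
  have hP : pochInf (qv ^ (n + 3) * z1v * z2v ^ 2) =
      (1 - qv ^ (n + 3) * z1v * z2v ^ 2) * pochInf (qv ^ (n + 4) * z1v * z2v ^ 2) := by
    rw [pochInf_eq_one_sub_mul]; ring_nf
  have hn : n + 2 - 1 = n + 1 := rfl
  simp only [Aterm, fnS, fn, vComp, Nat.add_sub_cancel, hn, Nat.triangle_add_two, hP,
    pochFin_succ, MvPowerSeries.mul_inv_rev]
  ring

theorem Bterm_succ (n i l : ℕ) :
    Bterm (n + 1) i l = (bTail n - bTail (n + 1)) * vComp 1 i l := by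
  have h2 : n + 1 + 1 = n + 2 := rfl
  have h3 : n + 1 + 2 = n + 3 := rfl
  have h4 : n + 1 + 3 = n + 4 := rfl
  have hP := pochInf_eq_one_sub_mul (qv ^ (n + 3) * z1v * z2v ^ 2)
  rw [show qv ^ (n + 3) * z1v * z2v ^ 2 * qv = qv ^ (n + 4) * z1v * z2v ^ 2 by ring] at hP
  simp only [Bterm, fnS, bTail, vComp, Nat.add_sub_cancel, h2, h3, h4, Nat.triangle_add_two, hP,
    pochFin_succ, MvPowerSeries.mul_inv_rev, pow_one]
  set x : R := 1 - qv ^ (n + 3) * z1v * z2v ^ 2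
  set y : R := 1 - qv ^ (n + 1)
  set w : R := 1 - qv ^ (n + 2) * z2v
  have hx : x * x⁻¹ = 1 := MvPowerSeries.mul_inv_cancel _ (by simp [x, qv])
  have hy : y * y⁻¹ = 1 := MvPowerSeries.mul_inv_cancel _ (by simp [y, qv])
  have hw : w * w⁻¹ = 1 := MvPowerSeries.mul_inv_cancel _ (by simp [w, qv])
  -- partial fractions: `(1 - q^{2n+4}z₁z₂²) / (x y) = 1 / x + q^{n+1} / y`
  linear_combination (-1 : R) ^ n * qv ^ ((n + 1) * n / 2) * (pochInf qv)⁻¹ *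
      (pochInf (qv ^ (n + 4) * z1v * z2v ^ 2))⁻¹ * (pochFin n)⁻¹ * (1 - qv * z2v)⁻¹ *
      ((qv * z2v) ^ (l - i) * z2v ^ i) *
      ((1 - qv ^ (2 * n + 4) * z1v * z2v ^ 2) * x⁻¹ * y⁻¹ * hw + x⁻¹ * hy + qv ^ (n + 1) * y⁻¹ * hx)

theorem bTail_zero : bTail 0 = fn 1 := by
  have hP := pochInf_eq_one_sub_mul (qv ^ 2 * z1v * z2v ^ 2)
  rw [show qv ^ 2 * z1v * z2v ^ 2 * qv = qv ^ 3 * z1v * z2v ^ 2 by ring] at hP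
  simp only [bTail, fn, Nat.sub_self, zero_add, hP, pochFin, prod_range_zero, inv_one, pow_one,
    MvPowerSeries.mul_inv_rev]
  set x : R := 1 - qv ^ 2 * z1v * z2v ^ 2
  have hx : x * x⁻¹ = 1 := MvPowerSeries.mul_inv_cancel _ (by simp [x, qv])
  linear_combination (-(pochInf qv)⁻¹ * (pochInf (qv ^ 3 * z1v * z2v ^ 2))⁻¹ * (1 - qv * z2v)⁻¹) * hx

theorem sum_range_Aterm_add_Bterm (i l N : ℕ) :
    ∑ n ∈ range N, (Aterm (n + 1) i l + Bterm (n + 1) i l) =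
      ∑ n ∈ range (N + 1), fn (n + 1) * vComp (n + 1) i l - bTail N * vComp 1 i l := by
  induction N with
  | zero => simp [bTail_zero]
  | succ N ih =>
    rw [sum_range_succ, ih, sum_range_succ _ (N + 1), Aterm_succ, Bterm_succ]
    ring

theorem qv_pow_dvd_fn_succ (n : ℕ) : qv ^ ((n + 1) * n / 2) ∣ fn (n + 1) :=
  ((dvd_mul_left _ _).mul_right _).mul_right _

theorem qv_pow_dvd_bTail (n : ℕ) : qv ^ ((n + 1) * n / 2) ∣ bTail n :=
  (dvd_mul_left _ _).mul_right _

theorem sumInf_eq_of_forall_qv_pow_dvd {s t : ℕ → R}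
    (h : ∀ N, qv ^ N ∣ ∑ n ∈ range (N + 1), s (n + 1) - ∑ n ∈ range (N + 1), t (n + 1)) :
    sumInf s = sumInf t :=
  funext fun d => coeff_eq_of_X_pow_dvd_sub (h (d 0 + d 1 + d 2 + 1)) (by omega)

theorem AB_fixed_point_general (i l : ℕ) :
    sumInf (fun n => Aterm n i l + Bterm n i l) =
      sumInf (fun n => fn n * (qv ^ n * z2v) ^ (l - i) * z2v ^ i) := by
  refine sumInf_eq_of_forall_qv_pow_dvd fun N => ?_
  have hN : N ≤ (N + 2) * (N + 1) / 2 := (Nat.le_div_iff_mul_le two_pos).2 (by nlinarith)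
  simp only [mul_assoc (fn _)]
  rw [sum_range_Aterm_add_Bterm, sum_range_succ _ (N + 1)]
  convert_to qv ^ N ∣ fn (N + 2) * vComp (N + 2) i l - bTail (N + 1) * vComp 1 i l using 1
  · simp only [vComp]; ring
  exact (pow_dvd_pow qv hN).trans
    (dvd_sub ((qv_pow_dvd_fn_succ _).mul_right _) ((qv_pow_dvd_bTail _).mul_right _))

/-- The fixed point equation `(A+B) v_∞ = v_∞` for `v_∞ = ∑_{n≥1} fₙ vₙ`,
`vₙ = [1, qⁿz₂, z₂]`: componentwise,
`∑_{n≥1} ((A fₙvₙ)_{i,l} + (B fₙvₙ)_{i,l}) = ∑_{n≥1} fₙ (qⁿz₂)^{l-i} z₂^i`. -/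
theorem AB_fixed_point (k : ℕ) (hk : 1 ≤ k) (i l : ℕ) (hil : i ≤ l) (hlk : l ≤ k) :
    sumInf (fun n => Aterm n i l + Bterm n i l) =
      sumInf (fun n => fn n * (qv ^ n * z2v) ^ (l - i) * z2v ^ i) :=
  AB_fixed_point_general i l

end Boson
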